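/- If ξ(x) → ∞ as x → ∞, then for every constant c > 0, ξ(x + c)/ξ(x) → 1 as x → ∞. -/

import Mathlib

open MeasureTheory ProbabilityTheory Filter Set
open scoped ENNReal NNReal

noncomputable section

/-- The (right) tail function `t ↦ P(X > t)` of a random variable, as a real number. -/
def tail {Ω : Type*} [MeasurableSpace Ω] (μ : Measure Ω) (X : Ω → ℝ) (t : ℝ) : ℝ :=
  (μ {ω | t < X ω}).toReal

/-- The auxiliary function `ξ(x) = (∫ₓ^∞ P(X > t) dt)/P(X > x)`. -/
def auxFun {Ω : Type*} [MeasurableSpace Ω] (μ : Measure Ω) (X : Ω → ℝ) (x : ℝ) : ℝ :=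
  (∫ t in Set.Ioi x, tail μ X t) / tail μ X x

section aux
variable {Ω : Type*} [MeasurableSpace Ω] (μ : Measure Ω) [IsProbabilityMeasure μ]
  (X : Ω → ℝ)

lemma tail_anti : Antitone (tail μ X) := by
  intro s t hst
  apply ENNReal.toReal_mono (measure_ne_top μ _)
  exact measure_mono (fun ω hω => lt_of_le_of_lt hst hω)

lemma tail_meas : Measurable (tail μ X) := (tail_anti μ X).measurable

lemma tail_pos (hpos : ∀ t : ℝ, 0 < μ {ω | t < X ω}) (t : ℝ) : 0 < tail μ X t :=
  ENNReal.toReal_pos (hpos t).ne' (measure_ne_top μ _)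

lemma tail_intOn (hX : Measurable X)
    (hplus : Integrable (fun ω => max (X ω) 0) μ) (x : ℝ) :
    IntegrableOn (tail μ X) (Ioi x) := by
  have hnn : (0:Ω → ℝ) ≤ᵐ[μ] fun ω => max (X ω) 0 :=
    Eventually.of_forall fun ω => le_max_right (X ω) 0
  have key := lintegral_eq_lintegral_meas_lt μ hnn hplus.aemeasurable
  have hfin : ∫⁻ t in Ioi (0:ℝ), μ {ω | t < X ω} < ∞ := by
    have : ∫⁻ t in Ioi (0:ℝ), μ {ω | t < max (X ω) 0} < ∞ := by
      rw [← key]; exact hplus.lintegral_lt_top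
    refine lt_of_le_of_lt (le_of_eq ?_) this
    refine setLIntegral_congr_fun measurableSet_Ioi (fun t ht => ?_)
    congr 1
    ext ω
    simp only [Set.mem_setOf_eq, lt_max_iff]
    exact ⟨Or.inl, fun h => h.elim id (fun h0 => absurd (lt_trans ht h0) (lt_irrefl _ ∘ id))⟩
  -- integrable on Ioi 0
  have h0 : IntegrableOn (tail μ X) (Ioi 0) := by
    refine ⟨(tail_meas μ X).aestronglyMeasurable, ?_⟩
    show HasFiniteIntegral (fun t => (μ {ω | t < X ω}).toReal) _
    rw [hasFiniteIntegral_iff_ofReal (Eventually.of_forall fun t => ENNReal.toReal_nonneg)]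
    refine lt_of_le_of_lt (le_of_eq ?_) hfin
    refine setLIntegral_congr_fun measurableSet_Ioi (fun t _ => ?_)
    exact ENNReal.ofReal_toReal (measure_ne_top μ _)
  -- integrable on bounded interval
  have h1 : IntegrableOn (tail μ X) (Ioc x 0) := by
    have : IntegrableOn (fun _ : ℝ => (1:ℝ)) (Ioc x 0) := integrableOn_const measure_Ioc_lt_top.ne
    refine Integrable.mono this (tail_meas μ X).aestronglyMeasurable ?_
    refine Eventually.of_forall fun t => ?_
    simp only [tail, Real.norm_eq_abs, abs_of_nonneg ENNReal.toReal_nonneg, norm_one]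
    exact ENNReal.toReal_le_of_le_ofReal zero_le_one (by simpa using prob_le_one)
  have hsub : Ioi x ⊆ Ioc x 0 ∪ Ioi 0 := by
    intro t ht
    rcases le_or_gt t 0 with h | h
    · exact Or.inl ⟨ht, h⟩
    · exact Or.inr h
  exact IntegrableOn.mono_set (h1.union h0) hsub

end aux

/-- for a long-tailed random variable, if the auxiliary function
`ξ(x) = (∫ₓ^∞ P(X > t) dt)/P(X > x)` tends to `∞`, then for every `c > 0`,
`ξ(x + c)/ξ(x) → 1` as `x → ∞`. -/
theorem statement19 {Ω : Type*} [MeasurableSpace Ω] (μ : Measure Ω)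
    [IsProbabilityMeasure μ]
    (X : Ω → ℝ) (hX : Measurable X)
    (hpos : ∀ t : ℝ, 0 < μ {ω | t < X ω})
    (hplus : Integrable (fun ω => max (X ω) 0) μ)
    -- `X` is long-tailed
    (hlong : ∀ a : ℝ, Tendsto (fun t => tail μ X (t + a) / tail μ X t) atTop (nhds 1))
    -- the auxiliary function tends to infinity
    (hξ : Tendsto (auxFun μ X) atTop atTop) :
    ∀ c : ℝ, 0 < c →
      Tendsto (fun x => auxFun μ X (x + c) / auxFun μ X x) atTop (nhds 1) := by
  intro c hc
  set F := tail μ X with hF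
  set I : ℝ → ℝ := fun x => ∫ t in Ioi x, F t with hI
  have hFpos := tail_pos μ X hpos
  have hFanti := tail_anti μ X
  have hInt := tail_intOn μ X hX hplus
  have hFnn : ∀ t, 0 ≤ F t := fun t => (hFpos t).le
  -- I positive
  have hIpos : ∀ x, 0 < I x := by
    intro x
    have h1 : ∫ t in Ioc x (x+1), F (x+1) ≤ ∫ t in Ioc x (x+1), F t := by
      refine setIntegral_mono_on (integrableOn_const measure_Ioc_lt_top.ne)
        ((hInt x).mono_set Ioc_subset_Ioi_self) measurableSet_Ioc ?_
      intro t ht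
      exact hFanti ht.2
    have h2 : ∫ t in Ioc x (x+1), F t ≤ I x := by
      refine setIntegral_mono_set (hInt x) (Eventually.of_forall hFnn)
        (HasSubset.Subset.eventuallyLE Ioc_subset_Ioi_self)
    have h3 : (0:ℝ) < ∫ t in Ioc x (x+1), F (x+1) := by
      rw [setIntegral_const]
      rw [measureReal_def, Real.volume_Ioc]
      simp only [add_sub_cancel_left]
      rw [ENNReal.toReal_ofReal zero_le_one, one_smul]
      exact hFpos (x+1)
    linarith
  -- split
  have hsplit : ∀ x, I x = (∫ t in Ioc x (x+c), F t) + I (x+c) := by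
    intro x
    rw [hI]
    rw [← setIntegral_union (Ioc_disjoint_Ioi le_rfl) measurableSet_Ioi
      ((hInt x).mono_set Ioc_subset_Ioi_self) (hInt (x+c))]
    rw [Ioc_union_Ioi_eq_Ioi (by linarith)]
  have hBnn : ∀ x, 0 ≤ ∫ t in Ioc x (x+c), F t :=
    fun x => setIntegral_nonneg measurableSet_Ioc (fun t _ => hFnn t)
  have hBle : ∀ x, ∫ t in Ioc x (x+c), F t ≤ c * F x := by
    intro x
    have : ∫ t in Ioc x (x+c), F t ≤ ∫ t in Ioc x (x+c), F x := by
      refine setIntegral_mono_on ((hInt x).mono_set Ioc_subset_Ioi_self)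
        (integrableOn_const measure_Ioc_lt_top.ne) measurableSet_Ioc ?_
      intro t ht
      exact hFanti ht.1.le
    refine le_trans this (le_of_eq ?_)
    rw [setIntegral_const, measureReal_def, Real.volume_Ioc]
    simp only [add_sub_cancel_left]
    rw [ENNReal.toReal_ofReal hc.le, smul_eq_mul]
  -- auxFun x = I x / F x
  have hxi : ∀ x, auxFun μ X x = I x / F x := fun x => rfl
  have hxipos : ∀ x, 0 < auxFun μ X x := fun x => div_pos (hIpos x) (hFpos x)
  -- squeeze for I(x+c)/I x
  have hg : Tendsto (fun x => I (x+c) / I x) atTop (nhds 1) := by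
    have hlow : Tendsto (fun x => 1 - c / auxFun μ X x) atTop (nhds 1) := by
      have h0 : Tendsto (fun x => c / auxFun μ X x) atTop (nhds 0) := by
        simpa [div_eq_mul_inv] using (hξ.inv_tendsto_atTop).const_mul c
      simpa using (tendsto_const_nhds.sub h0 : Tendsto (fun x => (1:ℝ) - c / auxFun μ X x) atTop (nhds (1 - 0)))
    refine tendsto_of_tendsto_of_tendsto_of_le_of_le hlow tendsto_const_nhds ?_ ?_
    · intro x
      have key : c / auxFun μ X x = c * F x / I x := by
        rw [hxi, div_div_eq_mul_div]
      show 1 - c / auxFun μ X x ≤ I (x + c) / I x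
      rw [key]
      have h1 : I (x+c) = I x - ∫ t in Ioc x (x+c), F t := by
        have := hsplit x; linarith
      rw [h1, sub_div, div_self (hIpos x).ne']
      have hq : (∫ t in Ioc x (x+c), F t) / I x ≤ c * F x / I x := by
        gcongr
        · exact (hIpos x).le
        · exact hBle x
      linarith
    · intro x
      show I (x + c) / I x ≤ 1
      rw [div_le_one (hIpos x)]
      have := hsplit x
      linarith [hBnn x]
  -- tail ratio
  have h2 : Tendsto (fun x => F x / F (x+c)) atTop (nhds 1) := by
    have := (hlong c).inv₀ one_ne_zero
    simp only [inv_one] at this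
    refine this.congr fun x => ?_
    rw [inv_div]
  have heq : ∀ x, auxFun μ X (x+c) / auxFun μ X x = (I (x+c) / I x) * (F x / F (x+c)) := by
    intro x
    rw [hxi, hxi]
    field_simp
  refine Tendsto.congr (fun x => (heq x).symm) ?_
  simpa using hg.mul h2
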